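/- Let n and N be integers with 1 ≤ N ≤ n, and let λ be a real number such that λ − n/2 + k ≠ 0 for every integer k with 1 ≤ k ≤ N and λ − n + N ≠ 0. Then ∑_{j=0}^{N} (−N)_j (n/2)_j (λ)_j / ((λ − n/2 + 1)_j (n − N + 1)_j · j!) = [(λ − n + 1)_N · (n/2 − N + 1)_N / ((λ − n/2 + 1)_N · (n − N + 1)_N)] · (λ − n + 2N)/(λ − n + N). (This is the evaluation of the 2-balanced terminating ₃F₂(n/2, λ, −N; λ − n/2 + 1, n − N + 1; 1) obtained in the proof of Proposition 4.2 via Sheppard's transformation.) -/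

import Mathlib

/-!
The sum is a terminating, 2-balanced ₃F₂ at 1. Writing `(a)_j = (a+1)_j - j (a+1)_{j-1}` splits
it into two terminating 1-balanced ₃F₂'s, each of which is evaluated by the Pfaff–Saalschütz
formula; for the parameters of the theorem the two closed forms combine into the stated product.

Pfaff–Saalschütz is proved in its polynomial form
`∑_j C(M,j) (a)_j (b)_j (c+j)_{M-j} (c-a-b)_{M-j} = (c-a)_M (c-b)_M`, by induction on `M` with a
Wilf–Zeilberger certificate relating the sums for `(M+1, c)` and `(M, c+1)`.
-/

noncomputable def poch (x : ℝ) : ℕ → ℝ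
  | 0 => 1
  | k + 1 => poch x k * (x + k)

@[simp] lemma poch_zero (x : ℝ) : poch x 0 = 1 := rfl

lemma poch_succ (x : ℝ) (k : ℕ) : poch x (k + 1) = poch x k * (x + k) := rfl

lemma poch_succ_left (x : ℝ) (k : ℕ) : poch x (k + 1) = x * poch (x + 1) k := by
  induction k with
  | zero => simp [poch_succ]
  | succ k ih => rw [poch_succ, ih, poch_succ]; push_cast; ring

lemma poch_add (x : ℝ) (m k : ℕ) : poch x (m + k) = poch x m * poch (x + m) k := by
  induction k with
  | zero => simp
  | succ k ih => rw [← add_assoc, poch_succ, ih, poch_succ]; push_cast; ring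

lemma poch_ne_zero {x : ℝ} {k : ℕ} (h : ∀ i < k, x + i ≠ 0) : poch x k ≠ 0 := by
  induction k with
  | zero => simp
  | succ k ih => exact mul_ne_zero (ih fun i hi => h i (by omega)) (h k (by omega))

lemma poch_natCast (m k : ℕ) : poch m k = m.ascFactorial k := by
  induction k with
  | zero => simp
  | succ k ih => rw [poch_succ, ih, Nat.ascFactorial_succ]; push_cast; ring

lemma poch_neg (s : ℝ) (j : ℕ) : poch (-s) j = (-1) ^ j * poch (s - j + 1) j := by
  induction j with
  | zero => simp
  | succ j ih =>
    rw [poch_succ, ih, poch_succ_left (s - ↑(j + 1) + 1), pow_succ]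
    push_cast
    ring_nf

lemma poch_neg_natCast {M j : ℕ} (h : j ≤ M) :
    poch (-M) j = (-1) ^ j * (M.choose j * j.factorial) := by
  have hcast : (M : ℝ) - j + 1 = ((M - j : ℕ) + 1 : ℕ) := by push_cast [h]; ring
  rw [poch_neg, hcast, poch_natCast, Nat.ascFactorial_eq_factorial_mul_choose,
    Nat.sub_add_cancel h]
  push_cast
  ring

lemma poch_succ_sub_poch (a : ℝ) (i : ℕ) :
    poch (a + 1) (i + 1) - poch a (i + 1) = (i + 1) * poch (a + 1) i := by
  rw [poch_succ, poch_succ_left]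
  ring

noncomputable def saalschutzSummand (M : ℕ) (a b c : ℝ) (j : ℕ) : ℝ :=
  M.choose j * poch a j * poch b j * poch (c + j) (M - j) * poch (c - a - b) (M - j)

noncomputable def saalschutzCertificate (M : ℕ) (a b c : ℝ) (j : ℕ) : ℝ :=
  j * (j + a + b - c - M) * saalschutzSummand M a b c j

lemma saalschutzSummand_telescope (M : ℕ) (a b c : ℝ) {j : ℕ} (hj : j ≤ M + 1) :
    (M + 1) * (c - a - b) * (saalschutzSummand (M + 1) a b c j -
        (c - a) * (c - b) * saalschutzSummand M a b (c + 1) j) =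
      saalschutzCertificate (M + 1) a b c (j + 1) - saalschutzCertificate (M + 1) a b c j := by
  obtain hjM | rfl := hj.lt_or_eq
  · obtain ⟨k, rfl⟩ : ∃ k, M = j + k := ⟨M - j, by omega⟩
    unfold saalschutzCertificate saalschutzSummand
    rw [show j + k + 1 - j = k + 1 by omega, show j + k - j = k by omega,
      show j + k + 1 - (j + 1) = k by omega]
    have hB :
        ((j + k + 1 : ℕ) : ℝ) * (j + k).choose j = (k + 1 : ℕ) * (j + k + 1).choose j := by
      rw [mul_comm, ← Nat.cast_mul, Nat.choose_mul_succ_eq, show j + k + 1 - j = k + 1 by omega]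
      push_cast; ring
    have hC : ((j + 1 : ℕ) : ℝ) * (j + k + 1).choose (j + 1) =
        (j + k + 1 : ℕ) * (j + k).choose j := by
      rw [mul_comm, ← Nat.cast_mul, ← Nat.add_one_mul_choose_eq]
      push_cast; ring
    have hY : (c - a - b) * poch (c - a - b + 1) k = poch (c - a - b) k * (c - a - b + k) := by
      rw [← poch_succ_left, poch_succ]
    rw [poch_succ_left (c + j), poch_succ_left (c - a - b), poch_succ a j, poch_succ b j]
    have e1 : poch (c + 1 + j) k = poch (c + j + 1) k := by congr 1; ring
    have e2 : poch (c + ((j + 1 : ℕ) : ℝ)) k = poch (c + j + 1) k := by congr 1; push_cast; ring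
    have e3 : poch (c + 1 - a - b) k = poch (c - a - b + 1) k := by congr 1; ring
    rw [e1, e2, e3]
    push_cast at hB hC ⊢
    linear_combination
      (-(a + b - c - k) * (a + j) * (b + j) * poch (c - a - b) k * poch a j * poch b j *
          poch (c + j + 1) k) * hC +
        (-(j + k + 1) * ((j + k).choose j : ℝ) * (a + j) * (b + j) * poch a j * poch b j *
          poch (c + j + 1) k) * hY +
        ((c - a - b) * poch (c - a - b + 1) k * poch a j * poch b j * poch (c + j + 1) k *
          ((a + j) * (b + j) - (c - a) * (c - b))) * hB
  · simp [saalschutzCertificate, saalschutzSummand]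
    ring

theorem sum_saalschutzSummand (M : ℕ) (a b c : ℝ) :
    ∑ j ∈ Finset.range (M + 1), saalschutzSummand M a b c j =
      poch (c - a) M * poch (c - b) M := by
  induction M generalizing c with
  | zero => simp [saalschutzSummand]
  | succ M ih =>
    by_cases hc : c - a - b = 0
    · -- only the top term survives, since `poch 0 m = 0` for `m ≥ 1`
      rw [Finset.sum_eq_single_of_mem (M + 1) (by simp)]
      · simp [saalschutzSummand, show c - a = b by linarith, show c - b = a by linarith]
        ring
      · intro j hj hne
        rw [saalschutzSummand, show M + 1 - j = M - j + 1 by grind, hc, poch_succ_left 0]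
        ring
    · have hG0 : saalschutzCertificate (M + 1) a b c 0 = 0 := by simp [saalschutzCertificate]
      have hGtop : saalschutzCertificate (M + 1) a b c (M + 2) = 0 := by
        simp [saalschutzCertificate, saalschutzSummand]
      have htop : saalschutzSummand M a b (c + 1) (M + 1) = 0 := by simp [saalschutzSummand]
      have hsum : (M + 1) * (c - a - b) * ∑ j ∈ Finset.range (M + 2),
          (saalschutzSummand (M + 1) a b c j -
            (c - a) * (c - b) * saalschutzSummand M a b (c + 1) j) = 0 := by
        rw [Finset.mul_sum, Finset.sum_congr rfl fun j hj =>
          saalschutzSummand_telescope M a b c (Nat.lt_succ_iff.mp (Finset.mem_range.mp hj))]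
        rw [Finset.sum_range_sub, hG0, hGtop, sub_zero]
      have hne : ((M : ℝ) + 1) * (c - a - b) ≠ 0 := mul_ne_zero (by positivity) hc
      rw [mul_eq_zero, or_iff_right hne, Finset.sum_sub_distrib, sub_eq_zero, ← Finset.mul_sum,
        Finset.sum_range_succ (saalschutzSummand M a b (c + 1)) (M + 1), htop, add_zero, ih] at hsum
      rw [hsum, poch_succ_left (c - a), poch_succ_left (c - b)]
      ring_nf

-- `₃F₂(-M, a, b; c, d; 1)`
noncomputable def terminating3F2 (M : ℕ) (a b c d : ℝ) : ℝ :=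
  ∑ j ∈ Finset.range (M + 1),
    poch (-(M : ℝ)) j * poch a j * poch b j / (poch c j * poch d j * (j.factorial : ℝ))

theorem terminating3F2_saalschutz {M : ℕ} {a b c d : ℝ} (hd : d = a + b - c - M + 1)
    (hc : poch c M ≠ 0) (hcab : poch (c - a - b) M ≠ 0) :
    terminating3F2 M a b c d =
      poch (c - a) M * poch (c - b) M / (poch c M * poch (c - a - b) M) := by
  rw [← sum_saalschutzSummand, Finset.sum_div, terminating3F2]
  refine Finset.sum_congr rfl fun j hj => ?_
  have hjM : j ≤ M := Nat.lt_succ_iff.mp (Finset.mem_range.mp hj)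
  have hc_split : poch c M = poch c j * poch (c + j) (M - j) := by
    rw [← poch_add, Nat.add_sub_cancel' hjM]
  have hsign : ((-1 : ℝ) ^ j) ^ 2 = 1 := by rw [← pow_mul, mul_comm, pow_mul]; norm_num
  -- `d` is the reflection of `c - a - b + (M - j)`, so `(d)_j` is the top part of `(c - a - b)_M`
  have hd_refl : poch d j = (-1) ^ j * poch (c - a - b + ↑(M - j)) j := by
    rw [show d = -(c - a - b + ↑(M - j) + j - 1) by push_cast [hjM]; rw [hd]; ring, poch_neg]
    congr 2; ring
  have hcab_split : poch (c - a - b) M = poch (c - a - b) (M - j) * ((-1) ^ j * poch d j) := by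
    rw [hd_refl, ← Nat.sub_add_cancel hjM, poch_add, Nat.sub_add_cancel hjM]
    linear_combination (-poch (c - a - b) (M - j) * poch (c - a - b + ↑(M - j)) j) * hsign
  rw [hc_split] at hc
  rw [hcab_split] at hcab
  simp only [ne_eq, mul_eq_zero, not_or] at hc hcab
  obtain ⟨hcj, hcj'⟩ := hc
  obtain ⟨hcabj, -, hdj⟩ := hcab
  rw [saalschutzSummand, poch_neg_natCast hjM, hc_split, hcab_split]
  field_simp
  rw [hsign, one_mul]

theorem terminating3F2_succ (K : ℕ) (a b c d : ℝ) :
    terminating3F2 (K + 1) a b c d =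
      terminating3F2 (K + 1) (a + 1) b c d +
        (K + 1) * b / (c * d) * terminating3F2 K (a + 1) (b + 1) (c + 1) (d + 1) := by
  rw [← sub_eq_iff_eq_add', terminating3F2, terminating3F2, ← Finset.sum_sub_distrib,
    Finset.sum_range_succ', terminating3F2, Finset.mul_sum]
  simp only [poch_zero, sub_self, add_zero]
  refine Finset.sum_congr rfl fun i _ => ?_
  -- `(a)_{i+1} - (a+1)_{i+1} = -(i+1) (a+1)_i`, and the factor `i + 1` cancels against `(i+1)!`
  have hpoch := poch_succ_sub_poch a i
  rw [poch_succ_left (-_), poch_succ_left b, poch_succ_left c, poch_succ_left d,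
    Nat.factorial_succ, show -((K + 1 : ℕ) : ℝ) + 1 = -K by push_cast; ring]
  rw [div_sub_div_same, ← sub_mul, ← mul_sub, ← neg_sub, hpoch]
  push_cast
  field_simp

theorem terminating3F2_two_balanced {K : ℕ} {a b c d : ℝ} (hd : d = a + b - c - K + 1)
    (hc : poch c (K + 1) ≠ 0) (hcab : poch (c - a - b - 1) (K + 1) ≠ 0) :
    terminating3F2 (K + 1) a b c d =
      poch (c - a) K * poch (c - b) K * ((c - a - 1) * (c - b + K) - (K + 1) * b) /
        (poch c (K + 1) * poch (c - a - b - 1) (K + 1)) := by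
  have hcab' : poch (c - (a + 1) - b) (K + 1) ≠ 0 := by
    rwa [show c - (a + 1) - b = c - a - b - 1 by ring]
  rw [poch_succ_left] at hc
  rw [poch_succ] at hcab
  obtain ⟨hc0, hc1⟩ := mul_ne_zero_iff.mp hc
  obtain ⟨hcab1, hd0⟩ := mul_ne_zero_iff.mp hcab
  have hcab1' : poch (c + 1 - (a + 1) - (b + 1)) K ≠ 0 := by
    rwa [show c + 1 - (a + 1) - (b + 1) = c - a - b - 1 by ring]
  rw [terminating3F2_succ,
    terminating3F2_saalschutz (by push_cast; rw [hd]; ring) (by rwa [poch_succ_left]) hcab',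
    terminating3F2_saalschutz (by rw [hd]; ring) hc1 hcab1']
  rw [show c - (a + 1) - b = c - a - b - 1 by ring, show c - (a + 1) = c - a - 1 by ring,
    show c + 1 - (a + 1) - (b + 1) = c - a - b - 1 by ring, show c + 1 - (a + 1) = c - a by ring,
    show c + 1 - (b + 1) = c - b by ring, poch_succ_left (c - a - 1),
    poch_succ (c - b), poch_succ_left c, poch_succ (c - a - b - 1),
    show d = -(c - a - b - 1 + K) by rw [hd]; ring]
  field_simp
  rw [sub_add_cancel]
  ring

theorem statement8 (n N : ℕ) (hN : 1 ≤ N) (hNn : N ≤ n) (lam : ℝ)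
    (hlam : ∀ k : ℕ, 1 ≤ k → k ≤ N → lam - (n : ℝ) / 2 + k ≠ 0)
    (hlam' : lam - (n : ℝ) + N ≠ 0) :
    ∑ j ∈ Finset.range (N + 1),
        poch (-(N : ℝ)) j * poch ((n : ℝ) / 2) j * poch lam j /
          (poch (lam - (n : ℝ) / 2 + 1) j * poch ((n : ℝ) - N + 1) j * (j.factorial : ℝ)) =
      poch (lam - n + 1) N * poch ((n : ℝ) / 2 - N + 1) N /
          (poch (lam - (n : ℝ) / 2 + 1) N * poch ((n : ℝ) - N + 1) N) *
        ((lam - n + 2 * N) / (lam - n + N)) := by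
  obtain ⟨K, rfl⟩ : ∃ K, N = K + 1 := ⟨N - 1, by omega⟩
  have hc : poch (lam - n / 2 + 1) (K + 1) ≠ 0 := poch_ne_zero fun i hi h => by
    apply hlam (i + 1) (by omega) (by omega)
    push_cast
    linarith
  have hcab : poch (-(n : ℝ)) (K + 1) ≠ 0 := poch_ne_zero fun i hi => by
    have : (i : ℝ) < n := by exact_mod_cast hi.trans_le hNn
    linarith
  refine (terminating3F2_two_balanced (by push_cast; ring) hc
    (by rwa [show lam - n / 2 + 1 - n / 2 - lam - 1 = -(n : ℝ) by ring])).trans ?_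
  rw [show lam - n / 2 + 1 - n / 2 - lam - 1 = -(n : ℝ) by ring,
    show lam - n / 2 + 1 - n / 2 = lam - n + 1 by ring,
    show lam - n / 2 + 1 - lam = -(n / 2 - 1) by ring, poch_neg, poch_neg,
    poch_succ (lam - n + 1),
    show (n : ℝ) / 2 - ↑(K + 1) + 1 = n / 2 - 1 - K + 1 by push_cast; ring,
    poch_succ (n / 2 - 1 - K + 1), pow_succ]
  push_cast at hlam' ⊢
  field_simp
  ring
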